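/- The function f(z) := limₙ fₙ(z) = limₙ Lₙ(Ẽₙ(z)) exists for every z ∈ ℝ, satisfies f(z) > 1, is continuous and strictly increasing on ℝ, and satisfies the functional equation f(z) = 1 + log f(e^z) for all z ∈ ℝ. -/

import Mathlib

noncomputable def modL : ℕ → ℝ → ℝ
  | 0, ρ => ρ
  | n + 1, ρ => 1 + Real.log (modL n ρ)

/-- Standard tetration: n-fold iterated exponential. -/
noncomputable def stE : ℕ → ℝ → ℝ
  | 0, z => z
  | n + 1, z => Real.exp (stE n z)

/-!
The approximants `fₙ = tetLog n` satisfy `fₙ₊₁ z = 1 + log (fₙ (exp z))`, and induction along this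
recursion gives `z ≤ fₙ z ≤ e + max z 1`, monotonicity in `n` and in `z`, and
`fₙ w ≤ fₙ z + (w - z)` for `z ≤ w`. Hence the limit `f` exists, is monotone and 1-Lipschitz, and
inherits the functional equation. Iterating that equation gives `f = modL N ∘ f ∘ stE N`; since the
tetration gap `stE N w - stE N z` tends to infinity for `z < w`, it eventually exceeds the width
`e - 1` of the band `1 + x ≤ f x ≤ e + x` (`x ≥ 1`), forcing `f z < f w`.
-/

open Real Filter Set

lemma stE_add (m k : ℕ) (z : ℝ) : stE (m + k) z = stE m (stE k z) := by
  induction m with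
  | zero => rw [zero_add]; rfl
  | succ m ih => rw [Nat.add_right_comm]; exact congrArg exp ih

lemma stE_succ' (n : ℕ) (z : ℝ) : stE (n + 1) z = stE n (exp z) :=
  stE_add n 1 z

lemma one_lt_stE {n : ℕ} (hn : 2 ≤ n) (z : ℝ) : 1 < stE n z := by
  obtain ⟨k, rfl⟩ := Nat.exists_eq_add_of_le' hn
  exact one_lt_exp_iff.2 (exp_pos _)

lemma two_mul_sub_le_exp_sub_exp {x y : ℝ} (hx : 1 ≤ x) (hxy : x ≤ y) :
    2 * (y - x) ≤ exp y - exp x := by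
  have hsplit : exp y = exp x * exp (y - x) := by rw [← exp_add, add_sub_cancel]
  have hx2 : 2 ≤ exp x := by linarith [add_one_le_exp x]
  nlinarith [add_one_le_exp (y - x)]

lemma two_pow_mul_sub_le_stE_sub {x y : ℝ} (hx : 1 ≤ x) (hxy : x ≤ y) (n : ℕ) :
    2 ^ n * (y - x) ≤ stE n y - stE n x := by
  induction n generalizing x y with
  | zero => simp [stE]
  | succ n ih =>
    rw [stE_succ', stE_succ', pow_succ, mul_assoc]
    have hexp : 1 ≤ exp x := one_le_exp (by linarith)
    calc 2 ^ n * (2 * (y - x)) ≤ 2 ^ n * (exp y - exp x) := by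
          gcongr; exact two_mul_sub_le_exp_sub_exp hx hxy
      _ ≤ _ := ih hexp (exp_le_exp.2 hxy)

lemma tendsto_stE_sub_atTop {z w : ℝ} (hzw : z < w) :
    Tendsto (fun n => stE n w - stE n z) atTop atTop := by
  rw [← tendsto_add_atTop_iff_nat 2]
  have hgap : 0 < stE 2 w - stE 2 z := sub_pos.2 (exp_lt_exp.2 (exp_lt_exp.2 hzw))
  refine tendsto_atTop_mono (fun n => ?_)
    ((tendsto_pow_atTop_atTop_of_one_lt one_lt_two).atTop_mul_const hgap)
  simp only [stE_add n 2]
  exact two_pow_mul_sub_le_stE_sub (one_lt_stE le_rfl z).le (sub_pos.1 hgap).le n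

lemma one_le_modL (n : ℕ) {ρ : ℝ} (hρ : 1 ≤ ρ) : 1 ≤ modL n ρ := by
  induction n with
  | zero => exact hρ
  | succ n ih => exact le_add_of_nonneg_right (log_nonneg ih)

lemma strictMonoOn_modL (n : ℕ) : StrictMonoOn (modL n) (Ici 1) := by
  induction n with
  | zero => exact strictMono_id.strictMonoOn _
  | succ n ih =>
    intro a ha b hb hab
    have hpos : 0 < modL n a := zero_lt_one.trans_le (one_le_modL n ha)
    exact add_lt_add_right (log_lt_log hpos (ih ha hb hab)) 1

noncomputable def tetLog (n : ℕ) (z : ℝ) : ℝ := modL n (stE n z)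

lemma tetLog_zero (z : ℝ) : tetLog 0 z = z := rfl

lemma tetLog_succ (n : ℕ) (z : ℝ) : tetLog (n + 1) z = 1 + log (tetLog n (exp z)) := by
  rw [tetLog, modL, stE_succ']; rfl

lemma tetLog_one (z : ℝ) : tetLog 1 z = 1 + z := by
  rw [tetLog_succ, tetLog_zero, log_exp]

lemma self_le_tetLog (n : ℕ) (z : ℝ) : z ≤ tetLog n z := by
  induction n generalizing z with
  | zero => rfl
  | succ n ih =>
    rw [tetLog_succ]
    have := log_le_log (exp_pos z) (ih (exp z))
    rw [log_exp] at this
    linarith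

lemma tetLog_exp_pos (n : ℕ) (z : ℝ) : 0 < tetLog n (exp z) :=
  (exp_pos z).trans_le (self_le_tetLog n _)

lemma tetLog_le (n : ℕ) (z : ℝ) : tetLog n z ≤ exp 1 + max z 1 := by
  induction n generalizing z with
  | zero => linarith [tetLog_zero z, exp_pos 1, le_max_left z 1]
  | succ n ih =>
    set m := max z 1
    have hm : 1 ≤ m := le_max_right z 1
    have hbound : tetLog n (exp z) ≤ 2 * exp m := by
      have h1 : exp 1 ≤ exp m := exp_le_exp.2 hm
      have h2 : max (exp z) 1 ≤ exp m :=
        max_le (exp_le_exp.2 (le_max_left z 1)) (one_le_exp (zero_le_one.trans hm))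
      linarith [ih (exp z)]
    have hlog := log_le_log (tetLog_exp_pos n z) hbound
    rw [log_mul two_ne_zero (exp_ne_zero m), log_exp] at hlog
    rw [tetLog_succ]
    linarith [log_two_lt_d9, exp_one_gt_two]

lemma monotone_tetLog_index (z : ℝ) : Monotone (tetLog · z) := by
  refine monotone_nat_of_le_succ fun n => ?_
  induction n generalizing z with
  | zero => rw [tetLog_one, tetLog_zero]; linarith
  | succ n ih =>
    rw [tetLog_succ, tetLog_succ (n + 1)]
    linarith [log_le_log (tetLog_exp_pos n z) (ih (exp z))]

lemma monotone_tetLog (n : ℕ) : Monotone (tetLog n) := by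
  induction n with
  | zero => exact monotone_id
  | succ n ih =>
    intro a b hab
    rw [tetLog_succ, tetLog_succ]
    linarith [log_le_log (tetLog_exp_pos n a) (ih (exp_le_exp.2 hab))]

lemma tetLog_le_add_sub (n : ℕ) {z w : ℝ} (hzw : z ≤ w) :
    tetLog n w ≤ tetLog n z + (w - z) := by
  induction n generalizing z w with
  | zero => simp [tetLog_zero]
  | succ n ih =>
    rw [tetLog_succ, tetLog_succ]
    set a := tetLog n (exp z)
    set b := tetLog n (exp w)
    have ha : exp z ≤ a := self_le_tetLog n _
    have hab : b ≤ a + (exp w - exp z) := by linarith [ih (exp_le_exp.2 hzw)]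
    have hexp : exp w = exp z * exp (w - z) := by rw [← exp_add, add_sub_cancel]
    have hmul : b ≤ a * exp (w - z) := by
      have : 1 ≤ exp (w - z) := one_le_exp (sub_nonneg.2 hzw)
      nlinarith
    have hlog := log_le_log (tetLog_exp_pos n w) hmul
    rw [log_mul (tetLog_exp_pos n z).ne' (exp_ne_zero _), log_exp] at hlog
    linarith

noncomputable def tetLogLim (z : ℝ) : ℝ := ⨆ n, tetLog n z

lemma bddAbove_range_tetLog (z : ℝ) : BddAbove (range (tetLog · z)) :=
  ⟨exp 1 + max z 1, forall_mem_range.2 fun n => tetLog_le n z⟩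

lemma tendsto_tetLog (z : ℝ) : Tendsto (tetLog · z) atTop (nhds (tetLogLim z)) :=
  tendsto_atTop_ciSup (monotone_tetLog_index z) (bddAbove_range_tetLog z)

lemma tetLog_le_tetLogLim (n : ℕ) (z : ℝ) : tetLog n z ≤ tetLogLim z :=
  le_ciSup (bddAbove_range_tetLog z) n

lemma tetLogLim_le (z : ℝ) : tetLogLim z ≤ exp 1 + max z 1 :=
  ciSup_le fun n => tetLog_le n z

lemma one_add_le_tetLogLim (z : ℝ) : 1 + z ≤ tetLogLim z :=
  tetLog_one z ▸ tetLog_le_tetLogLim 1 z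

lemma tetLogLim_eq (z : ℝ) : tetLogLim z = 1 + log (tetLogLim (exp z)) := by
  have hpos : 0 < tetLogLim (exp z) := by linarith [one_add_le_tetLogLim (exp z), exp_pos z]
  have hlim : Tendsto (fun n => 1 + log (tetLog n (exp z))) atTop
      (nhds (1 + log (tetLogLim (exp z)))) :=
    ((continuousAt_log hpos.ne').tendsto.comp (tendsto_tetLog (exp z))).const_add 1
  refine tendsto_nhds_unique ((tendsto_add_atTop_iff_nat 1).2 (tendsto_tetLog z)) ?_
  simpa only [tetLog_succ] using hlim

lemma one_lt_tetLogLim (z : ℝ) : 1 < tetLogLim z := by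
  rw [tetLogLim_eq]
  have := one_add_le_tetLogLim (exp z)
  linarith [log_pos (by linarith [exp_pos z] : 1 < tetLogLim (exp z))]

lemma tetLogLim_eq_modL (n : ℕ) (z : ℝ) : tetLogLim z = modL n (tetLogLim (stE n z)) := by
  induction n generalizing z with
  | zero => rfl
  | succ n ih => rw [modL, stE_succ', ← ih, ← tetLogLim_eq]

lemma monotone_tetLogLim : Monotone tetLogLim := fun _ w hzw =>
  ciSup_le fun n => (monotone_tetLog n hzw).trans (tetLog_le_tetLogLim n w)

lemma lipschitzWith_tetLogLim : LipschitzWith 1 tetLogLim := by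
  refine LipschitzWith.of_le_add fun w z => ?_
  rcases le_total z w with hzw | hwz
  · refine ciSup_le fun n => ?_
    linarith [tetLog_le_add_sub n hzw, tetLog_le_tetLogLim n z, le_abs_self (w - z),
      Real.dist_eq w z]
  · linarith [monotone_tetLogLim hwz, dist_nonneg (x := w) (y := z)]

lemma strictMono_tetLogLim : StrictMono tetLogLim := by
  intro z w hzw
  obtain ⟨N, hgap, hN⟩ := ((tendsto_stE_sub_atTop hzw).eventually_gt_atTop (exp 1 - 1)).and
    (eventually_ge_atTop 2) |>.exists
  have hz := one_lt_stE hN z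
  have hlt : tetLogLim (stE N z) < tetLogLim (stE N w) := by
    have := tetLogLim_le (stE N z)
    rw [max_eq_left hz.le] at this
    linarith [one_add_le_tetLogLim (stE N w)]
  rw [tetLogLim_eq_modL N z, tetLogLim_eq_modL N w]
  exact strictMonoOn_modL N (one_lt_tetLogLim _).le (one_lt_tetLogLim _).le hlt

theorem stmt_13 :
    ∃ f : ℝ → ℝ,
      (∀ z : ℝ, Filter.Tendsto (fun n : ℕ => modL n (stE n z)) Filter.atTop (nhds (f z))) ∧
      (∀ z : ℝ, 1 < f z) ∧ Continuous f ∧ StrictMono f ∧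
      (∀ z : ℝ, f z = 1 + Real.log (f (Real.exp z))) :=
  ⟨tetLogLim, tendsto_tetLog, one_lt_tetLogLim, lipschitzWith_tetLogLim.continuous,
    strictMono_tetLogLim, tetLogLim_eq⟩
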